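/- arXiv:1501.06736 — 6 statements merged into one kernel-verified Lean document; each statement's English description precedes it below -/
import Mathlib

section
/- Let d_l > 2 be an integer and set d_r = d_g = 2. For every x₁ ∈ (0,1) such that x₂[x₁] ∈ [0,1] and φ[x₁] ∈ [0,1], the BEC potential function of the (d_l,2,2) MN code at the nontrivial fixed point is strictly positive: U_BEC(x₁, x₂[x₁]; φ[x₁]) > 0. -/
/-- The BEC potential function `U_BEC(x₁,x₂;ε)` of the `(d_l,d_r,d_g)` MN code. -/
noncomputable def UBEC (dl dr dg : ℕ) (x₁ x₂ ε : ℝ) : ℝ :=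
  1 - ε * (1 - (1-x₁)^dr * (1-x₂)^(dg-1))^dg
    - ((dr : ℝ)/(dl : ℝ)) * (1 - (1-x₁)^(dr-1) * (1-x₂)^dg)^dl
    - (1-x₁)^dr * (1-x₂)^dg
    - (dr : ℝ) * x₁ * (1-x₁)^(dr-1) * (1-x₂)^dg
    - (dg : ℝ) * x₂ * (1-x₁)^dr * (1-x₂)^(dg-1)

/-- The nontrivial fixed-point parametrization `x₂[x₁]`. -/
noncomputable def x2FP (dl dr dg : ℕ) (x₁ : ℝ) : ℝ :=
  1 - ((1 - x₁ ^ ((1:ℝ)/((dl:ℝ) - 1))) / (1-x₁)^(dr-1)) ^ ((1:ℝ)/(dg:ℝ))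

/-- The channel value `φ[x₁]` at the nontrivial fixed point. -/
noncomputable def phiFP (dl dr dg : ℕ) (x₁ : ℝ) : ℝ :=
  x2FP dl dr dg x₁ / (1 - (1-x₁)^dr * (1 - x2FP dl dr dg x₁)^(dg-1))^(dg-1)

/-!
With `t = x₁ ^ (1/(d_l-1))` and `s = √((1-t)/(1-x₁))` the fixed point is `x₂ = 1 - s`, and the
potential collapses to `x₁ (s (2-x₁) - 2(1-t) - 2t/d_l)`. Put `σ = (1-x₁)/(1-t) = 1 + t + ⋯ + t^(d_l-2)`,
so that `s² σ = 1` and `1 < σ < d_l - 1`. AM–GM gives `s (1+σ) = s + 1/s > 2`, strictly because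
`σ ≠ 1`, and `(2-x₁) d_l - (d_l - t (d_l-1)) (1+σ) = t (d_l-1-σ) > 0` closes the gap.
-/

lemma x2FP_two_two (dl : ℕ) (x : ℝ) :
    x2FP dl 2 2 x = 1 - √((1 - x ^ (1 / ((dl : ℝ) - 1))) / (1 - x)) := by
  simp [x2FP, Real.sqrt_eq_rpow]

lemma phiFP_two_two (dl : ℕ) (x : ℝ) :
    phiFP dl 2 2 x = x2FP dl 2 2 x / (1 - (1 - x) ^ 2 * (1 - x2FP dl 2 2 x)) := by
  simp [phiFP]

lemma UBEC_two_two_one_sub (dl : ℕ) (x s : ℝ) :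
    UBEC dl 2 2 x (1 - s) ((1 - s) / (1 - (1 - x) ^ 2 * s)) =
      x * s * (2 - x) - 2 * x * (1 - x) * s ^ 2 - 2 / dl * (1 - (1 - x) * s ^ 2) ^ dl := by
  have hε : (1 - s) / (1 - (1 - x) ^ 2 * s) * (1 - (1 - x) ^ 2 * s) ^ 2 =
      (1 - s) * (1 - (1 - x) ^ 2 * s) := by
    rcases eq_or_ne (1 - (1 - x) ^ 2 * s) 0 with h | h
    · simp [h]
    · field_simp
  simp only [UBEC, Nat.add_one_sub_one, pow_one, sub_sub_cancel, hε]
  push_cast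
  ring

lemma one_sub_pow_div_one_sub_lt {t : ℝ} {m : ℕ} (ht0 : 0 < t) (ht1 : t < 1) (hm : 2 ≤ m) :
    (1 - t ^ m) / (1 - t) < m := by
  have := one_add_mul_self_lt_rpow_one_add (s := t - 1) (p := m) (by linarith) (by linarith)
    (by exact_mod_cast hm)
  rw [add_sub_cancel, Real.rpow_natCast] at this
  rw [div_lt_iff₀ (by linarith)]
  linarith

lemma one_lt_one_sub_pow_div_one_sub {t : ℝ} {m : ℕ} (ht0 : 0 < t) (ht1 : t < 1) (hm : 2 ≤ m) :
    1 < (1 - t ^ m) / (1 - t) := by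
  rw [one_lt_div (by linarith)]
  linarith [pow_lt_self_of_lt_one₀ ht0 ht1 hm]

lemma two_lt_mul_one_add {s σ : ℝ} (hs : 0 < s) (hσ : 1 < σ) (h : s ^ 2 * σ = 1) :
    2 < s * (1 + σ) := by
  have hs1 : s < 1 := by nlinarith [mul_lt_mul_of_pos_left hσ (pow_pos hs 2)]
  nlinarith [mul_pos hs (sub_pos.2 hs1)]

lemma lt_mul_two_sub_pow_of_fixedPoint {t s : ℝ} {m : ℕ} (hm : 2 ≤ m) (ht0 : 0 < t) (ht1 : t < 1) (hs : 0 < s)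
    (hfix : (1 - t ^ m) * s ^ 2 = 1 - t) :
    2 * (1 - t) + 2 * t / (m + 1) < s * (2 - t ^ m) := by
  set σ := (1 - t ^ m) / (1 - t) with hσ
  have hσ1 : 1 < σ := one_lt_one_sub_pow_div_one_sub ht0 ht1 hm
  have hσm : σ < m := one_sub_pow_div_one_sub_lt ht0 ht1 hm
  have hgeom : (1 - t) * σ = 1 - t ^ m := by
    rw [hσ]; field_simp [(by linarith : (1 : ℝ) - t ≠ 0)]
  have hsσ : s ^ 2 * σ = 1 := by
    refine mul_right_cancel₀ (by linarith : (1 : ℝ) - t ≠ 0) ?_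
    linear_combination s ^ 2 * hgeom + hfix
  have hamgm : 2 < s * (1 + σ) := two_lt_mul_one_add hs hσ1 hsσ
  have hx : t ^ m < 1 := pow_lt_one₀ ht0.le ht1 (by omega)
  have hm0 : (0 : ℝ) < m + 1 := by positivity
  have hpos : 0 < (m + 1) * (1 + σ) := by positivity
  have hgap : (2 - t ^ m) * (m + 1) - ((m + 1) - t * m) * (1 + σ) = t * (m - σ) := by
    linear_combination (-((m : ℝ) + 1)) * hgeom
  refine lt_of_mul_lt_mul_right ?_ hpos.le
  calc (2 * (1 - t) + 2 * t / (m + 1)) * ((m + 1) * (1 + σ))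
        = 2 * ((m + 1) - t * m) * (1 + σ) := by field_simp; ring
    _ < 2 * (2 - t ^ m) * (m + 1) := by
        linarith [mul_pos ht0 (sub_pos.2 hσm)]
    _ < s * (2 - t ^ m) * ((m + 1) * (1 + σ)) := by
        nlinarith [mul_pos (mul_pos (sub_pos.2 hamgm) (sub_pos.2 hx)) hm0]

/-- For `(d_l,2,2)` MN codes with `d_l > 2`, the BEC potential at every
nontrivial fixed point is strictly positive. -/
theorem stmt3 (dl : ℕ) (hl : 2 < dl) :
    ∀ x₁ ∈ Set.Ioo (0:ℝ) 1,
      x2FP dl 2 2 x₁ ∈ Set.Icc (0:ℝ) 1 →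
      phiFP dl 2 2 x₁ ∈ Set.Icc (0:ℝ) 1 →
      0 < UBEC dl 2 2 x₁ (x2FP dl 2 2 x₁) (phiFP dl 2 2 x₁) := by
  rintro x ⟨hx0, hx1⟩ - -
  obtain ⟨m, rfl⟩ : ∃ m, dl = m + 1 := ⟨dl - 1, by omega⟩
  have hm : 2 ≤ m := by omega
  rw [phiFP_two_two, x2FP_two_two, sub_sub_cancel, UBEC_two_two_one_sub,
    show (1 : ℝ) / (((m + 1 : ℕ) : ℝ) - 1) = (m : ℝ)⁻¹ by push_cast; simp]
  set t := x ^ (m : ℝ)⁻¹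
  have htm : t ^ m = x := Real.rpow_inv_natCast_pow hx0.le (by omega)
  have ht0 : 0 < t := Real.rpow_pos_of_pos hx0 _
  have ht1 : t < 1 := Real.rpow_lt_one hx0.le hx1 (inv_pos.2 (by exact_mod_cast (by omega : 0 < m)))
  set s := √((1 - t) / (1 - x))
  have hs : 0 < s := Real.sqrt_pos.2 (div_pos (by linarith) (by linarith))
  have hfix : (1 - x) * s ^ 2 = 1 - t := by
    rw [Real.sq_sqrt (div_pos (by linarith) (by linarith)).le, mul_div_cancel₀ _ (by linarith)]
  have hbound := lt_mul_two_sub_pow_of_fixedPoint hm ht0 ht1 hs (by rwa [htm])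
  rw [htm] at hbound
  rw [show 1 - (1 - x) * s ^ 2 = t by linarith, pow_succ t m, htm]
  push_cast
  have hU : x * s * (2 - x) - 2 * x * (1 - x) * s ^ 2 - 2 / ((m : ℝ) + 1) * (x * t)
      = x * (s * (2 - x) - (2 * (1 - t) + 2 * t / (m + 1))) := by
    linear_combination (-2 * x) * hfix
  rw [hU]
  exact mul_pos hx0 (by linarith)
end

section
/- Let d_l > 3 be an integer and set d_r = d_g = 3. For every x₁ ∈ (0,1) such that x₂[x₁] ∈ [0,1] and φ[x₁] ∈ [0,1], the BEC potential function of the (d_l,3,3) MN code at the nontrivial fixed point is strictly positive: U_BEC(x₁, x₂[x₁]; φ[x₁]) > 0. -/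
/-!
Write `u = 1 - x₁`, `v = 1 - x₂[x₁]` and `t = x₁^{1/(d_l-1)}`, so that the fixed-point equations
read `u²v³ = 1 - t` and `t^{d_l-1} = 1 - u`. At `φ[x₁]` the potential becomes the polynomial
`P(u,v) = v - 2u³v² + 4u³v³ - 3u²v³` minus `(3/d_l)·(1-u)(1-u²v³)`. Bernoulli's inequality
`t^{d_l-1} ≥ 1 - (d_l-1)(1-t)` gives `u ≤ (d_l-1)u²v³`, i.e. `3/d_l ≤ 3s/(u+s)` with `s = u²v³`,
and `P·(u+s) - 3s(1-s)(1-u)` is positive on the box `0 < u < 1`, `0 < v ≤ 1`.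
-/

open Real

lemma box_polynomial_nonneg {u v : ℝ} (hu0 : 0 < u) (hu1 : u < 1) (hv0 : 0 < v) (hv1 : v ≤ 1) :
    0 ≤ 2 + 2*v - v^2 - 2*u^2 - 4*u^2*v + u^3 + u^3*v + u^3*v^2 + u^3*v^3 - u^3*v^4 := by
  nlinarith [mul_nonneg (sub_nonneg.2 hv1) (sub_nonneg.2 hu1.le), sq_nonneg (1-u), sq_nonneg (1-v),
    mul_pos hu0 hv0, mul_nonneg (mul_nonneg hu0.le hu0.le) (sub_nonneg.2 hv1),
    mul_nonneg (mul_nonneg hu0.le hv0.le) (sub_nonneg.2 hv1),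
    mul_nonneg (mul_nonneg (mul_nonneg hu0.le hu0.le) hu0.le) (mul_nonneg hv0.le (sub_nonneg.2 hv1)),
    sq_nonneg (u - v), sq_nonneg (u*v - 1), sq_nonneg (u + v - 2)]

lemma three_mul_lt_fixedPoint_poly {u v : ℝ} (hu0 : 0 < u) (hu1 : u < 1) (hv0 : 0 < v)
    (hv1 : v ≤ 1) :
    3 * (u^2*v^3) * ((1 - u) * (1 - u^2*v^3))
      < (v - 2*u^3*v^2 + 4*u^3*v^3 - 3*u^2*v^3) * (u + u^2*v^3) := by
  have hT := box_polynomial_nonneg hu0 hu1 hv0 hv1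
  have hdecomp : (v - 2*u^3*v^2 + 4*u^3*v^3 - 3*u^2*v^3) * (u + u^2*v^3)
      - 3 * (u^2*v^3) * ((1 - u) * (1 - u^2*v^3))
      = u * v * ((1 - u)^3 * (1 + u)) + u^2 * v * (1 - v) *
        (2 + 2*v - v^2 - 2*u^2 - 4*u^2*v + u^3 + u^3*v + u^3*v^2 + u^3*v^3 - u^3*v^4) := by
    ring
  have h1 : 0 < u * v * ((1 - u)^3 * (1 + u)) := by
    have : 0 < 1 - u := by linarith
    positivity
  have h2 : 0 ≤ u^2 * v * (1 - v) := by
    have : 0 ≤ 1 - v := by linarith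
    positivity
  linarith [mul_nonneg h2 hT]

lemma three_div_mul_lt_fixedPoint_poly {u v d : ℝ} (hu0 : 0 < u) (hu1 : u < 1) (hv0 : 0 < v)
    (hv1 : v ≤ 1) (hd : u ≤ (d - 1) * (u^2*v^3)) :
    3 / d * ((1 - u) * (1 - u^2*v^3)) < v - 2*u^3*v^2 + 4*u^3*v^3 - 3*u^2*v^3 := by
  have hs0 : 0 < u^2*v^3 := by positivity
  have hs1 : u^2*v^3 < 1 := by
    have : u^2 < 1 := by nlinarith
    have : v^3 ≤ 1 := pow_le_one₀ hv0.le hv1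
    nlinarith
  have hd0 : 0 < d := by nlinarith
  have hus : 0 < u + u^2*v^3 := by positivity
  have hX : 0 ≤ (1 - u) * (1 - u^2*v^3) := mul_nonneg (by linarith) (by linarith)
  calc 3 / d * ((1 - u) * (1 - u^2*v^3))
      ≤ 3 * (u^2*v^3) / (u + u^2*v^3) * ((1 - u) * (1 - u^2*v^3)) := by
        refine mul_le_mul_of_nonneg_right ?_ hX
        rw [div_le_div_iff₀ hd0 hus]
        nlinarith
    _ < v - 2*u^3*v^2 + 4*u^3*v^3 - 3*u^2*v^3 := by
        rw [div_mul_eq_mul_div, div_lt_iff₀ hus]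
        exact three_mul_lt_fixedPoint_poly hu0 hu1 hv0 hv1

lemma rpow_one_div_sub_one_pow {x : ℝ} (hx : 0 ≤ x) {n : ℕ} (hn : 2 ≤ n) :
    (x ^ (1 / ((n:ℝ) - 1))) ^ (n - 1) = x := by
  have hcast : (n:ℝ) - 1 = ((n - 1 : ℕ) : ℝ) := by push_cast [show 1 ≤ n by omega]; ring
  rw [hcast, one_div]
  exact rpow_inv_natCast_pow hx (by omega)

lemma exists_root_of_x2FP (dr : ℕ) {dl dg : ℕ} (hdl : 2 ≤ dl) (hdg : dg ≠ 0) {x₁ : ℝ}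
    (hx0 : 0 < x₁) (hx1 : x₁ < 1) :
    ∃ t : ℝ, 0 ≤ t ∧ t < 1 ∧ t ^ (dl - 1) = x₁ ∧
      (1 - x₁) ^ (dr - 1) * (1 - x2FP dl dr dg x₁) ^ dg = 1 - t := by
  have hexp : (0:ℝ) < 1 / ((dl:ℝ) - 1) := by
    have : (2:ℝ) ≤ dl := by exact_mod_cast hdl
    exact div_pos one_pos (by linarith)
  have ht1 : x₁ ^ (1 / ((dl:ℝ) - 1)) < 1 := rpow_lt_one hx0.le hx1 hexp
  have hu : 0 < (1 - x₁) ^ (dr - 1) := pow_pos (by linarith) _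
  refine ⟨_, rpow_nonneg hx0.le _, ht1, rpow_one_div_sub_one_pow hx0.le hdl, ?_⟩
  rw [x2FP, sub_sub_cancel, one_div (dg:ℝ),
    rpow_inv_natCast_pow (div_nonneg (by linarith) hu.le) hdg]
  field_simp

lemma UBEC_fixedPoint_eq (dl : ℕ) {u v : ℝ} (hu0 : 0 < u) (hu1 : u < 1) (hv0 : 0 < v)
    (hv1 : v ≤ 1) (hv : x2FP dl 3 3 (1 - u) = 1 - v) :
    UBEC dl 3 3 (1 - u) (x2FP dl 3 3 (1 - u)) (phiFP dl 3 3 (1 - u))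
      = v - 2*u^3*v^2 + 4*u^3*v^3 - 3*u^2*v^3 - 3 / dl * (1 - u^2*v^3)^dl := by
  have hA : 1 - u^3*v^2 ≠ 0 := by
    have : u^3 < 1 := pow_lt_one₀ hu0.le hu1 three_ne_zero
    have : u^3 * v^2 ≤ u^3 :=
      mul_le_of_le_one_right (pow_nonneg hu0.le 3) (pow_le_one₀ hv0.le hv1)
    linarith
  rw [UBEC, phiFP, hv]
  norm_num
  field_simp
  ring

/-- For `(d_l,3,3)` MN codes with `d_l > 3`, the BEC potential at every
nontrivial fixed point is strictly positive. -/
theorem stmt4 (dl : ℕ) (hl : 3 < dl) :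
    ∀ x₁ ∈ Set.Ioo (0:ℝ) 1,
      x2FP dl 3 3 x₁ ∈ Set.Icc (0:ℝ) 1 →
      phiFP dl 3 3 x₁ ∈ Set.Icc (0:ℝ) 1 →
      0 < UBEC dl 3 3 x₁ (x2FP dl 3 3 x₁) (phiFP dl 3 3 x₁) := by
  rintro x₁ ⟨hx0, hx1⟩ hx2 -
  obtain ⟨t, ht0, ht1, ht_pow, hs⟩ := exists_root_of_x2FP 3 (dl := dl) (by omega) three_ne_zero hx0 hx1
  obtain ⟨u, rfl⟩ : ∃ u, x₁ = 1 - u := ⟨1 - x₁, by ring⟩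
  obtain ⟨v, hv⟩ : ∃ v, x2FP dl 3 3 (1 - u) = 1 - v := ⟨1 - x2FP dl 3 3 (1 - u), by ring⟩
  rw [hv, sub_sub_cancel, sub_sub_cancel] at hs
  change u^2 * v^3 = 1 - t at hs
  have hu0 : 0 < u := by linarith
  have hu1 : u < 1 := by linarith
  have hv0 : 0 < v := by
    have : 0 < u^2 * v^3 := by rw [hs]; linarith
    exact Odd.pow_pos_iff (by decide) |>.1 (pos_of_mul_pos_right this (by positivity))
  have hv1 : v ≤ 1 := by linarith [hv ▸ hx2.1]
  have hbernoulli : u ≤ ((dl:ℝ) - 1) * (u^2*v^3) := by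
    have h := one_add_mul_sub_le_pow (by linarith : (-1:ℝ) ≤ t) (dl - 1)
    rw [ht_pow, Nat.cast_sub (by omega : 1 ≤ dl), Nat.cast_one] at h
    rw [hs]
    linarith
  have hpow : (1 - u^2*v^3)^dl = (1 - u) * (1 - u^2*v^3) := by
    rw [hs, sub_sub_cancel, ← Nat.sub_add_cancel (by omega : 1 ≤ dl), pow_succ, ht_pow]
  rw [UBEC_fixedPoint_eq dl hu0 hu1 hv0 hv1 hv, hpow, sub_pos]
  exact three_div_mul_lt_fixedPoint_poly hu0 hu1 hv0 hv1 hbernoulli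
end

section
/- Let d_l > d_r ≥ 2 and d_g ≥ 2 be integers and let φ be a GEC transfer function with integral Φ. Let x₁ ∈ (0,1) be such that x₂[x₁] ∈ [0,1], and let ε ∈ [0,1] satisfy φ(ψ[x₁]; ε) = φ[x₁]. Then the MN potential at the nontrivial fixed point dominates its BEC counterpart: U(x₁, x₂[x₁]; ε) ≥ U_BEC(x₁, x₂[x₁]; φ[x₁]), with equality when φ(x;ε) is constant in x. -/
/-!
The two potentials differ only in the channel term: with `ψ = ψ[x₁]`,
`U(x₁, x₂[x₁]; ε) − U_BEC(x₁, x₂[x₁]; φ[x₁]) = φ[x₁]·ψ − Φ(ψ; ε)`.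
The fixed-point condition turns `φ[x₁]·ψ` into `φ(ψ; ε)·ψ`, which dominates
`∫₀^ψ φ(t; ε) dt` because `φ(·; ε)` is nondecreasing, with equality when it is constant.
-/

/-- The integral `Φ(x;ε) := ∫₀ˣ φ(t;ε) dt` of a GEC transfer function. -/
noncomputable def Phi (φ : ℝ → ℝ → ℝ) (x ε : ℝ) : ℝ := ∫ t in (0:ℝ)..x, φ t ε

/-- A GEC transfer function: maps `[0,1]×[0,1]` to `[0,1]`, continuous and
nondecreasing in `x` for each `ε`, strictly increasing in `ε` for each `x`. -/
def IsGEC (φ : ℝ → ℝ → ℝ) : Prop :=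
  (∀ x ∈ Set.Icc (0:ℝ) 1, ∀ ε ∈ Set.Icc (0:ℝ) 1, φ x ε ∈ Set.Icc (0:ℝ) 1) ∧
  (∀ ε ∈ Set.Icc (0:ℝ) 1, ContinuousOn (fun x => φ x ε) (Set.Icc (0:ℝ) 1) ∧
      MonotoneOn (fun x => φ x ε) (Set.Icc (0:ℝ) 1)) ∧
  (∀ x ∈ Set.Icc (0:ℝ) 1, StrictMonoOn (fun ε => φ x ε) (Set.Icc (0:ℝ) 1))

/-- The MN potential function `U(x₁,x₂;ε)` of the `(d_l,d_r,d_g)` MN code. -/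
noncomputable def U (dl dr dg : ℕ) (φ : ℝ → ℝ → ℝ) (x₁ x₂ ε : ℝ) : ℝ :=
  1 - Phi φ ((1 - (1-x₁)^dr * (1-x₂)^(dg-1))^dg) ε
    - ((dr : ℝ)/(dl : ℝ)) * (1 - (1-x₁)^(dr-1) * (1-x₂)^dg)^dl
    - (1-x₁)^dr * (1-x₂)^dg
    - (dr : ℝ) * x₁ * (1-x₁)^(dr-1) * (1-x₂)^dg
    - (dg : ℝ) * x₂ * (1-x₁)^dr * (1-x₂)^(dg-1)

/-- `ψ[x₁] := (1−(1−x₁)^{d_r}(1−x₂[x₁])^{d_g−1})^{d_g}`. -/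
noncomputable def psiFP (dl dr dg : ℕ) (x₁ : ℝ) : ℝ :=
  (1 - (1-x₁)^dr * (1 - x2FP dl dr dg x₁)^(dg-1))^dg

open Set

lemma integral_le_mul_of_monotoneOn {f : ℝ → ℝ} {a b : ℝ} (hab : a ≤ b)
    (hf : MonotoneOn f (Icc a b)) : ∫ t in a..b, f t ≤ (b - a) * f b := by
  have hint : IntervalIntegrable f MeasureTheory.volume a b :=
    MonotoneOn.intervalIntegrable (by rwa [uIcc_of_le hab])
  calc ∫ t in a..b, f t ≤ ∫ _ in a..b, f b :=
        intervalIntegral.integral_mono_on hab hint intervalIntegrable_const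
          fun t ht => hf ht (right_mem_Icc.2 hab) ht.2
    _ = (b - a) * f b := by rw [intervalIntegral.integral_const, smul_eq_mul]

lemma integral_eq_mul_of_eqOn {f : ℝ → ℝ} {a b : ℝ} (hab : a ≤ b)
    (hf : ∀ t ∈ Icc a b, f t = f b) : ∫ t in a..b, f t = (b - a) * f b := by
  rw [intervalIntegral.integral_congr (g := fun _ => f b) (by rwa [uIcc_of_le hab]),
    intervalIntegral.integral_const, smul_eq_mul]

lemma one_sub_pow_mul_pow_pow_mem_Icc {a b : ℝ} (ha : a ∈ Icc (0:ℝ) 1) (hb : b ∈ Icc (0:ℝ) 1)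
    (m n k : ℕ) : (1 - a ^ m * b ^ n) ^ k ∈ Icc (0:ℝ) 1 := by
  have h₀ : 0 ≤ a ^ m * b ^ n := mul_nonneg (pow_nonneg ha.1 m) (pow_nonneg hb.1 n)
  have h₁ : a ^ m * b ^ n ≤ 1 :=
    mul_le_one₀ (pow_le_one₀ ha.1 ha.2) (pow_nonneg hb.1 n) (pow_le_one₀ hb.1 hb.2)
  exact ⟨pow_nonneg (by linarith) k, pow_le_one₀ (by linarith) (by linarith)⟩

lemma psiFP_mem_Icc (dl dr dg : ℕ) {x₁ : ℝ} (hx₁ : x₁ ∈ Icc (0:ℝ) 1)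
    (hx₂ : x2FP dl dr dg x₁ ∈ Icc (0:ℝ) 1) : psiFP dl dr dg x₁ ∈ Icc (0:ℝ) 1 :=
  one_sub_pow_mul_pow_pow_mem_Icc ⟨by linarith [hx₁.2], by linarith [hx₁.1]⟩
    ⟨by linarith [hx₂.2], by linarith [hx₂.1]⟩ _ _ _

lemma U_sub_UBEC (dl dr dg : ℕ) (φ : ℝ → ℝ → ℝ) (x₁ x₂ ε c : ℝ) :
    U dl dr dg φ x₁ x₂ ε - UBEC dl dr dg x₁ x₂ c
      = c * (1 - (1-x₁)^dr * (1-x₂)^(dg-1))^dg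
        - Phi φ ((1 - (1-x₁)^dr * (1-x₂)^(dg-1))^dg) ε := by
  unfold U UBEC
  ring

lemma Phi_le_mul_of_monotoneOn {φ : ℝ → ℝ → ℝ} {x ε : ℝ} (hx : 0 ≤ x)
    (hφ : MonotoneOn (fun t => φ t ε) (Icc 0 x)) : Phi φ x ε ≤ x * φ x ε := by
  simpa only [Phi, sub_zero] using integral_le_mul_of_monotoneOn hx hφ

lemma Phi_eq_mul_of_eqOn {φ : ℝ → ℝ → ℝ} {x ε : ℝ} (hx : 0 ≤ x)
    (hφ : ∀ t ∈ Icc 0 x, φ t ε = φ x ε) : Phi φ x ε = x * φ x ε := by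
  simpa only [Phi, sub_zero] using integral_eq_mul_of_eqOn (f := fun t => φ t ε) hx hφ

lemma U_sub_UBEC_phiFP (dl dr dg : ℕ) (φ : ℝ → ℝ → ℝ) (x₁ ε : ℝ)
    (hfix : φ (psiFP dl dr dg x₁) ε = phiFP dl dr dg x₁) :
    U dl dr dg φ x₁ (x2FP dl dr dg x₁) ε
        - UBEC dl dr dg x₁ (x2FP dl dr dg x₁) (phiFP dl dr dg x₁)
      = psiFP dl dr dg x₁ * φ (psiFP dl dr dg x₁) ε - Phi φ (psiFP dl dr dg x₁) ε := by
  rw [U_sub_UBEC, hfix, mul_comm]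
  rfl

theorem stmt6_general (dl dr dg : ℕ)
    (φ : ℝ → ℝ → ℝ) (hφ : IsGEC φ)
    (x₁ : ℝ) (hx₁ : x₁ ∈ Set.Ioo (0:ℝ) 1)
    (hx₂ : x2FP dl dr dg x₁ ∈ Set.Icc (0:ℝ) 1)
    (ε : ℝ) (hε : ε ∈ Set.Icc (0:ℝ) 1)
    (hfix : φ (psiFP dl dr dg x₁) ε = phiFP dl dr dg x₁) :
    UBEC dl dr dg x₁ (x2FP dl dr dg x₁) (phiFP dl dr dg x₁)
      ≤ U dl dr dg φ x₁ (x2FP dl dr dg x₁) ε ∧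
    ((∀ x ∈ Set.Icc (0:ℝ) 1, ∀ y ∈ Set.Icc (0:ℝ) 1, φ x ε = φ y ε) →
      UBEC dl dr dg x₁ (x2FP dl dr dg x₁) (phiFP dl dr dg x₁)
        = U dl dr dg φ x₁ (x2FP dl dr dg x₁) ε) := by
  have hψ := psiFP_mem_Icc dl dr dg (Ioo_subset_Icc_self hx₁) hx₂
  have hsub : Icc 0 (psiFP dl dr dg x₁) ⊆ Icc (0:ℝ) 1 := Icc_subset_Icc_right hψ.2
  have hgap := U_sub_UBEC_phiFP dl dr dg φ x₁ ε hfix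
  refine ⟨?_, fun hconst => ?_⟩
  · have := Phi_le_mul_of_monotoneOn hψ.1 ((hφ.2.1 ε hε).2.mono hsub)
    linarith
  · have := Phi_eq_mul_of_eqOn hψ.1
      fun t ht => hconst t (hsub ht) _ hψ
    linarith

/-- At a nontrivial fixed point, the GEC potential dominates its BEC
counterpart, with equality when `φ(x;ε)` is constant in `x`. -/
theorem stmt6 (dl dr dg : ℕ) (hrl : dr < dl) (hr : 2 ≤ dr) (hg : 2 ≤ dg)
    (φ : ℝ → ℝ → ℝ) (hφ : IsGEC φ)
    (x₁ : ℝ) (hx₁ : x₁ ∈ Set.Ioo (0:ℝ) 1)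
    (hx₂ : x2FP dl dr dg x₁ ∈ Set.Icc (0:ℝ) 1)
    (ε : ℝ) (hε : ε ∈ Set.Icc (0:ℝ) 1)
    (hfix : φ (psiFP dl dr dg x₁) ε = phiFP dl dr dg x₁) :
    UBEC dl dr dg x₁ (x2FP dl dr dg x₁) (phiFP dl dr dg x₁)
      ≤ U dl dr dg φ x₁ (x2FP dl dr dg x₁) ε ∧
    ((∀ x ∈ Set.Icc (0:ℝ) 1, ∀ y ∈ Set.Icc (0:ℝ) 1, φ x ε = φ y ε) →
      UBEC dl dr dg x₁ (x2FP dl dr dg x₁) (phiFP dl dr dg x₁)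
        = U dl dr dg φ x₁ (x2FP dl dr dg x₁) ε) :=
  stmt6_general dl dr dg φ hφ x₁ hx₁ hx₂ ε hε hfix
end

section
/- Let d_l > d_r ≥ 2 and d_g ≥ 2 be integers and let φ be a GEC transfer function with integral Φ. Every nonzero fixed point of the (d_l,d_r,d_g) MN density evolution at parameter ε ∈ [0,1] is either the trivial fixed point (1, φ(1;ε)) or has the parametric form (x₁, x₂[x₁]) for some x₁ ∈ (0,1) with x₂[x₁] ∈ [0,1]; that is, if (x₁,x₂) ∈ [0,1]² \ {(0,0)} satisfies (x₁,x₂) = f(g(x₁,x₂); ε), then either x₁ = 1 and x₂ = φ(1;ε), or x₁ ∈ (0,1) and x₂ = x₂[x₁]. -/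
/-- The map `f(x₁,x₂;ε) := (x₁^{d_l−1}, φ(x₂^{d_g};ε)·x₂^{d_g−1})` of the MN
density evolution. -/
noncomputable def fDE (dl dg : ℕ) (φ : ℝ → ℝ → ℝ) (x₁ x₂ ε : ℝ) : ℝ × ℝ :=
  (x₁^(dl-1), φ (x₂^dg) ε * x₂^(dg-1))

/-- The map `g(x₁,x₂) := (1−(1−x₁)^{d_r−1}(1−x₂)^{d_g}, 1−(1−x₁)^{d_r}(1−x₂)^{d_g−1})`
of the MN density evolution. -/
def gDE (dr dg : ℕ) (x₁ x₂ : ℝ) : ℝ × ℝ :=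
  (1 - (1-x₁)^(dr-1) * (1-x₂)^dg, 1 - (1-x₁)^dr * (1-x₂)^(dg-1))

open Set

lemma Real.eq_rpow_one_div_of_pow_eq {x y : ℝ} {n : ℕ} (hy : 0 ≤ y) (hn : n ≠ 0)
    (h : y ^ n = x) : y = x ^ (1 / (n : ℝ)) := by
  rw [← h, one_div, Real.pow_rpow_inv_natCast hy hn]

lemma gDE_snd_one_left {dr : ℕ} (dg : ℕ) (x₂ : ℝ) (hdr : dr ≠ 0) : (gDE dr dg 1 x₂).2 = 1 := by
  simp [gDE, hdr]

section FirstComponent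

variable {dl dr dg : ℕ} {x₁ x₂ : ℝ}

lemma pos_of_fst_fixed (hdl : 2 ≤ dl) (hdg : dg ≠ 0) (hx₁ : 0 ≤ x₁) (hx₂ : x₂ ∈ Icc 0 1)
    (hne : (x₁, x₂) ≠ (0, 0)) (hfix : x₁ = (gDE dr dg x₁ x₂).1 ^ (dl - 1)) : 0 < x₁ := by
  refine hx₁.lt_of_ne fun h₀ => hne ?_
  subst h₀
  have hpow : (1 - x₂) ^ dg = 1 := by
    have := pow_eq_zero_iff (n := dl - 1) (by omega) |>.mp hfix.symm
    simp only [gDE, sub_zero, one_pow, one_mul] at this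
    linarith
  have : 1 - x₂ = 1 := (pow_eq_one_iff_of_nonneg (by linarith [hx₂.2]) hdg).mp hpow
  simp only [Prod.mk.injEq, true_and]
  linarith

lemma eq_x2FP_of_fst_fixed (hdl : 2 ≤ dl) (hdg : dg ≠ 0) (hx₁ : x₁ ∈ Ioo 0 1)
    (hx₂ : x₂ ∈ Icc 0 1) (hfix : x₁ = (gDE dr dg x₁ x₂).1 ^ (dl - 1)) :
    x₂ = x2FP dl dr dg x₁ := by
  have hleft : 0 < 1 - x₁ := by linarith [hx₁.2]
  have hright : 0 ≤ 1 - x₂ := by linarith [hx₂.2]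
  have hG : 0 ≤ (gDE dr dg x₁ x₂).1 := by
    have : (1 - x₁) ^ (dr - 1) * (1 - x₂) ^ dg ≤ 1 :=
      mul_le_one₀ (pow_le_one₀ hleft.le (by linarith [hx₁.1])) (by positivity)
        (pow_le_one₀ hright (by linarith [hx₂.1]))
    simp only [gDE]
    linarith
  have hroot : (gDE dr dg x₁ x₂).1 = x₁ ^ (1 / ((dl : ℝ) - 1)) := by
    have hcast : ((dl : ℝ) - 1) = ((dl - 1 : ℕ) : ℝ) := by
      rw [Nat.cast_sub (by omega), Nat.cast_one]
    rw [hcast]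
    exact Real.eq_rpow_one_div_of_pow_eq hG (by omega) hfix.symm
  have hpow : (1 - x₂) ^ dg = (1 - x₁ ^ (1 / ((dl : ℝ) - 1))) / (1 - x₁) ^ (dr - 1) := by
    rw [← hroot, eq_div_iff (by positivity)]
    simp only [gDE]
    ring
  rw [x2FP, ← hpow, ← Real.eq_rpow_one_div_of_pow_eq hright hdg rfl]
  ring

end FirstComponent

theorem stmt9_general (dl dr dg : ℕ) (hrl : dr < dl) (hr : 2 ≤ dr) (hg : 2 ≤ dg)
    (φ : ℝ → ℝ → ℝ)
    (ε : ℝ)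
    (x₁ x₂ : ℝ) (hx₁ : x₁ ∈ Set.Icc (0:ℝ) 1) (hx₂ : x₂ ∈ Set.Icc (0:ℝ) 1)
    (hne : (x₁, x₂) ≠ (0, 0))
    (hfix : (x₁, x₂) = fDE dl dg φ (gDE dr dg x₁ x₂).1 (gDE dr dg x₁ x₂).2 ε) :
    (x₁ = 1 ∧ x₂ = φ 1 ε) ∨ (x₁ ∈ Set.Ioo (0:ℝ) 1 ∧ x₂ = x2FP dl dr dg x₁) := by
  have hfix₁ : x₁ = (gDE dr dg x₁ x₂).1 ^ (dl - 1) := congrArg Prod.fst hfix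
  have hdl : 2 ≤ dl := by omega
  have hdg : dg ≠ 0 := by omega
  rcases hx₁.2.eq_or_lt with rfl | hlt
  · left
    have hfix₂ := congrArg Prod.snd hfix
    rw [fDE, gDE_snd_one_left dg x₂ (by omega)] at hfix₂
    simpa using hfix₂
  · right
    have hx₁' : x₁ ∈ Ioo 0 1 := ⟨pos_of_fst_fixed hdl hdg hx₁.1 hx₂ hne hfix₁, hlt⟩
    exact ⟨hx₁', eq_x2FP_of_fst_fixed hdl hdg hx₁' hx₂ hfix₁⟩

/-- Every nonzero fixed point of the `(d_l,d_r,d_g)` MN density evolution is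
either the trivial fixed point `(1, φ(1;ε))` or of the form `(x₁, x₂[x₁])`
for some `x₁ ∈ (0,1)`. -/
theorem stmt9 (dl dr dg : ℕ) (hrl : dr < dl) (hr : 2 ≤ dr) (hg : 2 ≤ dg)
    (φ : ℝ → ℝ → ℝ) (hφ : IsGEC φ)
    (ε : ℝ) (hε : ε ∈ Set.Icc (0:ℝ) 1)
    (x₁ x₂ : ℝ) (hx₁ : x₁ ∈ Set.Icc (0:ℝ) 1) (hx₂ : x₂ ∈ Set.Icc (0:ℝ) 1)
    (hne : (x₁, x₂) ≠ (0, 0))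
    (hfix : (x₁, x₂) = fDE dl dg φ (gDE dr dg x₁ x₂).1 (gDE dr dg x₁ x₂).2 ε) :
    (x₁ = 1 ∧ x₂ = φ 1 ε) ∨ (x₁ ∈ Set.Ioo (0:ℝ) 1 ∧ x₂ = x2FP dl dr dg x₁) :=
  stmt9_general dl dr dg hrl hr hg φ ε x₁ x₂ hx₁ hx₂ hne hfix
end

section
/- Let (d_r,d_g) be either (2,2) or (3,3), let d_l > d_r be an integer, and let φ be a GEC transfer function with integral Φ. Suppose ε^SIR ∈ [0,1] satisfies Φ(1; ε^SIR) = 1 − d_r/d_l. Define the set of nonzero fixed points F(ε) := {(x₁,x₂) ∈ [0,1]² \ {(0,0)} : (x₁,x₂) = f(g(x₁,x₂); ε)} and the potential threshold ε* := sup{ε ∈ [0,1] : U(x₁,x₂;ε) > 0 for all (x₁,x₂) ∈ F(ε)}. Then ε* = ε^SIR. -/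
/-- The set of nonzero fixed points of the MN density evolution at `ε`. -/
noncomputable def FPset (dl dr dg : ℕ) (φ : ℝ → ℝ → ℝ) (ε : ℝ) : Set (ℝ × ℝ) :=
  {p | p ∈ Set.Icc (0:ℝ) 1 ×ˢ Set.Icc (0:ℝ) 1 ∧ p ≠ (0, 0) ∧
    p = fDE dl dg φ (gDE dr dg p.1 p.2).1 (gDE dr dg p.1 p.2).2 ε}

/-!
Write `d = d_r = d_g`. At every fixed point with `x₁ = 1`, in particular at the fixed point `(1, φ(1;ε))`, the
potential equals `1 - Φ(1;ε) - d/d_l`, so positivity there means exactly `Φ(1;ε) < Φ(1;ε^SIR)`, i.e.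
`ε < ε^SIR` as `Φ(1;·)` is strictly increasing. At any other fixed point put `u = 1 - x₁`,
`v = 1 - x₂` and `p = u^(d-1) v^d`. The bound `Φ(c) ≤ c φ(c)` (monotonicity of `φ`) and the
fixed-point equations bound `U` below by a polynomial `W`; Bernoulli's inequality applied to
`1 - u = (1 - p)^(d_l - 1)` gives `u + p < d_l p`, and then `(u + p) W` is the sum of a polynomial
that is nonnegative on the unit square for `d = 2, 3` and a positive slack term. So the set of
admissible `ε` is `[0, ε^SIR)`, whose supremum is `ε^SIR`.
-/

open Set MeasureTheory

lemma Phi_one_strictMonoOn {φ : ℝ → ℝ → ℝ} (hφ : IsGEC φ) :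
    StrictMonoOn (Phi φ 1) (Icc 0 1) := by
  intro ε₁ h₁ ε₂ h₂ hlt
  have i₁ := (hφ.2.1 ε₁ h₁).1.intervalIntegrable_of_Icc (μ := volume) zero_le_one
  have i₂ := (hφ.2.1 ε₂ h₂).1.intervalIntegrable_of_Icc (μ := volume) zero_le_one
  have hpos : 0 < ∫ t in (0:ℝ)..1, (φ t ε₂ - φ t ε₁) :=
    intervalIntegral.intervalIntegral_pos_of_pos_on (i₂.sub i₁)
      (fun x hx => sub_pos.2 (hφ.2.2 x ⟨hx.1.le, hx.2.le⟩ h₁ h₂ hlt)) one_pos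
  rw [intervalIntegral.integral_sub i₂ i₁, sub_pos] at hpos
  exact hpos

lemma Phi_le_mul_self {φ : ℝ → ℝ → ℝ} (hφ : IsGEC φ) {c ε : ℝ}
    (hc : c ∈ Icc (0:ℝ) 1) (hε : ε ∈ Icc (0:ℝ) 1) :
    Phi φ c ε ≤ c * φ c ε := by
  have hsub : Icc 0 c ⊆ Icc (0:ℝ) 1 := Icc_subset_Icc le_rfl hc.2
  have hint :=
    ((hφ.2.1 ε hε).1.mono hsub).intervalIntegrable_of_Icc (μ := volume) hc.1
  have h := intervalIntegral.integral_mono_on hc.1 hint intervalIntegrable_const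
    (fun x hx => (hφ.2.1 ε hε).2 (hsub hx) hc hx.2)
  simpa [Phi] using h

lemma one_sub_mul_lt_one_sub_pow {p : ℝ} (hp0 : 0 < p) (hp1 : p ≤ 1) {m : ℕ} (hm : 2 ≤ m) :
    1 - m * p < (1 - p) ^ m := by
  obtain ⟨j, rfl⟩ : ∃ j, m = j + 1 := ⟨m - 1, by omega⟩
  have hj : (1:ℝ) ≤ j := by exact_mod_cast (show 1 ≤ j by omega)
  have hbern : 1 - j * p ≤ (1 - p) ^ j := by
    simpa [sub_eq_add_neg] using one_add_mul_le_pow (a := -p) (by linarith) j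
  calc 1 - ((j + 1 : ℕ) : ℝ) * p < (1 - j * p) * (1 - p) := by
        push_cast
        nlinarith [mul_pos (by linarith : (0:ℝ) < j) (mul_pos hp0 hp0)]
    _ ≤ (1 - p) ^ j * (1 - p) := mul_le_mul_of_nonneg_right hbern (by linarith)
    _ = (1 - p) ^ (j + 1) := (pow_succ _ _).symm

lemma U_one_left (dl dr dg : ℕ) (hdr : 2 ≤ dr) (φ : ℝ → ℝ → ℝ) (x ε : ℝ) :
    U dl dr dg φ 1 x ε = 1 - Phi φ 1 ε - (dr : ℝ) / dl := by
  simp [U, zero_pow (show dr ≠ 0 by omega), zero_pow (show dr - 1 ≠ 0 by omega)]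

lemma one_phi_mem_FPset (dl dr dg : ℕ) (hdr : 2 ≤ dr) {φ : ℝ → ℝ → ℝ} (hφ : IsGEC φ)
    {ε : ℝ} (hε : ε ∈ Icc (0:ℝ) 1) : (1, φ 1 ε) ∈ FPset dl dr dg φ ε :=
  ⟨⟨right_mem_Icc.2 zero_le_one, hφ.1 1 (right_mem_Icc.2 zero_le_one) ε hε⟩, by simp,
    by simp [fDE, gDE, zero_pow (show dr ≠ 0 by omega), zero_pow (show dr - 1 ≠ 0 by omega)]⟩

/-- With `p = u^(d-1) v^d` and `q = u^d v^(d-1)`, the second factor is the lower bound for the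
potential at a fixed point `(1 - u, 1 - v)`, up to the term `-(d/d_l)(1 - u)(1 - p)`. -/
def potentialKey (d : ℕ) (u v : ℝ) : ℝ :=
  (u + u ^ (d - 1) * v ^ d) * (1 - (1 - u ^ d * v ^ (d - 1)) * (1 - v) - u ^ d * v ^ d
      - d * (1 - u) * (u ^ (d - 1) * v ^ d) - d * (1 - v) * (u ^ d * v ^ (d - 1)))
    - d * (u ^ (d - 1) * v ^ d) * (1 - u ^ (d - 1) * v ^ d) * (1 - u)

lemma potentialKey_two_nonneg {u v : ℝ} (hu : u ∈ Icc (0:ℝ) 1) (hv : v ∈ Icc (0:ℝ) 1) :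
    0 ≤ potentialKey 2 u v := by
  have h : potentialKey 2 u v = u * v * (1 - u) * (1 + u) * (1 - v) ^ 2 := by
    norm_num [potentialKey]; ring
  have := sub_nonneg.2 hu.2
  rw [h]
  have := hu.1; have := hv.1
  positivity

lemma potentialKey_three_nonneg {u v : ℝ} (hu : u ∈ Icc (0:ℝ) 1) (hv : v ∈ Icc (0:ℝ) 1) :
    0 ≤ potentialKey 3 u v := by
  have h : potentialKey 3 u v = u * v * (
      2*u^4*(1-v)^2*v^3 + 3*u^4*(1-v)^3*v^2 + 3*u^4*(1-v)^4*v + u^4*(1-v)^5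
      + 3*(1-u)*u^3*(1-v)*v^4 + 16*(1-u)*u^3*(1-v)^2*v^3 + 27*(1-u)*u^3*(1-v)^3*v^2
      + 18*(1-u)*u^3*(1-v)^4*v + 4*(1-u)*u^3*(1-v)^5
      + 9*(1-u)^2*u^2*(1-v)*v^4 + 36*(1-u)^2*u^2*(1-v)^2*v^3 + 51*(1-u)^2*u^2*(1-v)^3*v^2
      + 30*(1-u)^2*u^2*(1-v)^4*v + 6*(1-u)^2*u^2*(1-v)^5
      + 2*(1-u)^3*u*v^5 + 13*(1-u)^3*u*(1-v)*v^4 + 32*(1-u)^3*u*(1-v)^2*v^3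
      + 37*(1-u)^3*u*(1-v)^3*v^2 + 20*(1-u)^3*u*(1-v)^4*v + 4*(1-u)^3*u*(1-v)^5
      + (1-u)^4*v^5 + 5*(1-u)^4*(1-v)*v^4 + 10*(1-u)^4*(1-v)^2*v^3
      + 10*(1-u)^4*(1-v)^3*v^2 + 5*(1-u)^4*(1-v)^4*v + (1-u)^4*(1-v)^5) := by
    norm_num [potentialKey]; ring
  have := sub_nonneg.2 hu.2
  have := sub_nonneg.2 hv.2
  have := hu.1; have := hv.1
  rw [h]
  positivity

lemma U_pos_of_fixed_point {k dl : ℕ} (hk : 1 ≤ k) (hdl : k + 1 < dl) {u v : ℝ}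
    (hu0 : 0 < u) (hu1 : u < 1) (hv0 : 0 < v) (hv1 : v ≤ 1)
    (hkey : 0 ≤ potentialKey (k + 1) u v) {φ : ℝ → ℝ → ℝ} (hφ : IsGEC φ) {ε : ℝ}
    (hε : ε ∈ Icc (0:ℝ) 1)
    (hfix₁ : 1 - u = (1 - u ^ k * v ^ (k + 1)) ^ (dl - 1))
    (hfix₂ : 1 - v = φ ((1 - u ^ (k + 1) * v ^ k) ^ (k + 1)) ε * (1 - u ^ (k + 1) * v ^ k) ^ k) :
    0 < U dl (k + 1) (k + 1) φ (1 - u) (1 - v) ε := by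
  set p := u ^ k * v ^ (k + 1) with hp
  set q := u ^ (k + 1) * v ^ k with hq
  have hp0 : 0 < p := by positivity
  have hp1 : p < 1 :=
    mul_lt_one_of_nonneg_of_lt_one_left (by positivity) (pow_lt_one₀ hu0.le hu1 (by omega))
      (pow_le_one₀ hv0.le hv1)
  have hq0 : 0 ≤ q := by positivity
  have hq1 : q ≤ 1 :=
    mul_le_one₀ (pow_le_one₀ hu0.le hu1.le) (by positivity) (pow_le_one₀ hv0.le hv1)
  have hbern : u + p < dl * p := by
    have h := one_sub_mul_lt_one_sub_pow hp0 hp1.le (show 2 ≤ dl - 1 by omega)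
    rw [← hfix₁, Nat.cast_sub (by omega : 1 ≤ dl)] at h
    push_cast at h
    linarith
  have hc : (1 - q) ^ (k + 1) ∈ Icc (0:ℝ) 1 :=
    ⟨pow_nonneg (by linarith) _, pow_le_one₀ (by linarith) (by linarith)⟩
  have hPhi : Phi φ ((1 - q) ^ (k + 1)) ε ≤ (1 - q) * (1 - v) := by
    calc Phi φ ((1 - q) ^ (k + 1)) ε ≤ (1 - q) ^ (k + 1) * φ ((1 - q) ^ (k + 1)) ε :=
          Phi_le_mul_self hφ hc hε
      _ = (1 - q) * (1 - v) := by rw [hfix₂, pow_succ]; ring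
  have hpow : (1 - p) ^ dl = (1 - u) * (1 - p) := by
    rw [hfix₁, ← pow_succ, Nat.sub_add_cancel (by omega)]
  set W := 1 - (1 - q) * (1 - v) - ((k + 1 : ℕ) : ℝ) / dl * ((1 - u) * (1 - p))
      - u ^ (k + 1) * v ^ (k + 1) - (k + 1 : ℕ) * (1 - u) * p - (k + 1 : ℕ) * (1 - v) * q
    with hW
  have hUW : W ≤ U dl (k + 1) (k + 1) φ (1 - u) (1 - v) ε := by
    simp only [U, sub_sub_cancel, Nat.add_sub_cancel, ← hp, ← hq, hpow]
    linarith
  have hsplit : (u + p) * W = potentialKey (k + 1) u v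
      + ((k + 1 : ℕ) * p - ((k + 1 : ℕ) : ℝ) / dl * (u + p)) * ((1 - p) * (1 - u)) := by
    simp only [potentialKey, Nat.add_sub_cancel, hW, hp, hq]
    ring
  have hslack :
      0 < ((k + 1 : ℕ) * p - ((k + 1 : ℕ) : ℝ) / dl * (u + p)) * ((1 - p) * (1 - u)) := by
    have hdl0 : (0:ℝ) < dl := by exact_mod_cast (show 0 < dl by omega)
    have hcoef : ((k + 1 : ℕ) * p - ((k + 1 : ℕ) : ℝ) / dl * (u + p))
        = ((k + 1 : ℕ) : ℝ) / dl * (dl * p - (u + p)) := by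
      field_simp
    rw [hcoef]
    exact mul_pos (mul_pos (by positivity) (by linarith)) (mul_pos (by linarith) (by linarith))
  have : 0 < (u + p) * W := by rw [hsplit]; linarith
  exact (pos_of_mul_pos_right this (by linarith)).trans_le hUW

theorem U_pos_of_mem_FPset {d dl : ℕ} (hd : 2 ≤ d) (hdl : d < dl)
    (hkey : ∀ u ∈ Icc (0:ℝ) 1, ∀ v ∈ Icc (0:ℝ) 1, 0 ≤ potentialKey d u v)
    {φ : ℝ → ℝ → ℝ} (hφ : IsGEC φ) {ε : ℝ} (hε : ε ∈ Icc (0:ℝ) 1)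
    (hgap : Phi φ 1 ε < 1 - (d : ℝ) / dl) {x : ℝ × ℝ} (hx : x ∈ FPset dl d d φ ε) :
    0 < U dl d d φ x.1 x.2 ε := by
  obtain ⟨⟨hx₁, hx₂⟩, hne, hfix⟩ := hx
  by_cases hx₁1 : x.1 = 1
  · rw [hx₁1, U_one_left dl d d hd]
    linarith
  obtain ⟨x₁, x₂⟩ := x
  obtain ⟨u, rfl⟩ : ∃ u, x₁ = 1 - u := ⟨1 - x₁, by ring⟩
  obtain ⟨v, rfl⟩ : ∃ v, x₂ = 1 - v := ⟨1 - x₂, by ring⟩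
  obtain ⟨k, rfl⟩ : ∃ k, d = k + 1 := ⟨d - 1, by omega⟩
  simp only [fDE, gDE, Prod.ext_iff, sub_sub_cancel, Nat.add_sub_cancel] at hfix
  obtain ⟨hfix₁, hfix₂⟩ := hfix
  simp only [mem_Icc, ne_eq, Prod.mk.injEq, sub_nonneg, sub_eq_self, sub_eq_zero]
    at hx₁ hx₂ hne hx₁1 ⊢
  have hu0 : 0 < u := lt_of_le_of_ne (by linarith) (Ne.symm hx₁1)
  have hv0 : 0 < v := by
    refine lt_of_le_of_ne (by linarith) fun hv => hx₁1 ?_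
    simpa [← hv] using hfix₁
  have hu1 : u < 1 := by
    refine lt_of_le_of_ne hx₁.1 fun hu => hne ⟨hu.symm, ?_⟩
    subst hu
    rw [sub_self, one_pow, one_mul, eq_comm, pow_eq_zero_iff (by omega), sub_eq_zero,
      eq_comm, pow_eq_one_iff_of_nonneg hv0.le (by omega)] at hfix₁
    exact hfix₁.symm
  exact U_pos_of_fixed_point (by omega) hdl hu0 hu1 hv0 (by linarith)
    (hkey u ⟨hu0.le, hu1.le⟩ v ⟨hv0.le, by linarith⟩) hφ hε hfix₁ hfix₂

theorem setOf_U_pos_eq_Ico {d dl : ℕ} (hd : 2 ≤ d) (hdl : d < dl)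
    (hkey : ∀ u ∈ Icc (0:ℝ) 1, ∀ v ∈ Icc (0:ℝ) 1, 0 ≤ potentialKey d u v)
    {φ : ℝ → ℝ → ℝ} (hφ : IsGEC φ) {εSIR : ℝ} (hεSIR : εSIR ∈ Icc (0:ℝ) 1)
    (hSIR : Phi φ 1 εSIR = 1 - (d : ℝ) / dl) :
    {ε ∈ Icc (0:ℝ) 1 | ∀ p ∈ FPset dl d d φ ε, 0 < U dl d d φ p.1 p.2 ε} = Ico 0 εSIR := by
  have hmono := Phi_one_strictMonoOn hφ
  ext ε
  constructor
  · rintro ⟨hε, hU⟩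
    have h := hU _ (one_phi_mem_FPset dl d d hd hφ hε)
    rw [U_one_left dl d d hd] at h
    refine ⟨hε.1, lt_of_not_ge fun hge => ?_⟩
    linarith [(hmono.le_iff_le hεSIR hε).2 hge]
  · rintro ⟨hε0, hlt⟩
    have hε : ε ∈ Icc (0:ℝ) 1 := ⟨hε0, hlt.le.trans hεSIR.2⟩
    have hgap : Phi φ 1 ε < 1 - (d : ℝ) / dl := hSIR ▸ hmono hε hεSIR hlt
    exact ⟨hε, fun x hx => U_pos_of_mem_FPset hd hdl hkey hφ hε hgap hx⟩

/-- For `(d_r,d_g) ∈ {(2,2),(3,3)}` and `d_l > d_r`, the potential threshold of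
the `(d_l,d_r,d_g)` MN code equals the SIR limit `ε^SIR` of the GEC. -/
theorem stmt10 (dl dr dg : ℕ)
    (hdeg : (dr = 2 ∧ dg = 2) ∨ (dr = 3 ∧ dg = 3)) (hrl : dr < dl)
    (φ : ℝ → ℝ → ℝ) (hφ : IsGEC φ)
    (εSIR : ℝ) (hεSIR : εSIR ∈ Set.Icc (0:ℝ) 1)
    (hSIR : Phi φ 1 εSIR = 1 - (dr : ℝ)/(dl : ℝ)) :
    sSup {ε ∈ Set.Icc (0:ℝ) 1 |
        ∀ p ∈ FPset dl dr dg φ ε, 0 < U dl dr dg φ p.1 p.2 ε}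
      = εSIR := by
  have hkey : ∀ u ∈ Icc (0:ℝ) 1, ∀ v ∈ Icc (0:ℝ) 1, 0 ≤ potentialKey dr u v := by
    rcases hdeg with ⟨rfl, -⟩ | ⟨rfl, -⟩
    exacts [fun u hu v hv => potentialKey_two_nonneg hu hv,
      fun u hu v hv => potentialKey_three_nonneg hu hv]
  obtain ⟨hdr, rfl⟩ : 2 ≤ dr ∧ dg = dr := by omega
  rw [setOf_U_pos_eq_Ico hdr hrl hkey hφ hεSIR hSIR]
  rcases hεSIR.1.eq_or_lt with h0 | h0
  · simp [← h0]
  · exact csSup_Ico h0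
end

section
/- For the partial response 2 erasure channel with erasure probability ε ∈ [0,1], whose detector transfer function is φ_PR2(x;ε) := 4ε³(4 − 4(1−ε)x + (1−ε)x²)/(4 − 2(1−ε²)x − (1−ε)ε²x²)², the symmetric information rate satisfies I_PR2(ε) = 1 − ∫₀¹ φ_PR2(t;ε) dt = 1 − 2ε³(1+ε)/(2 + ε² + ε³); equivalently, ∫₀ˣ φ_PR2(t;ε) dt = 4ε·(1/2 − (2−x)/(4 − 2(1−ε²)x − (1−ε)ε²x²)) for every x ∈ [0,1]. -/
/-! `t ↦ 4ε(1/2 − (2 − t)/D(t))`, with `D` the denominator of `φ_PR2`, is an antiderivative of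
`φ_PR2(·;ε)`: since `D(t) + (2 − t)D'(t) = ε²(4 − 4(1−ε)t + (1−ε)t²)`, the quotient rule gives
exactly `φ_PR2`. As `D` is positive on `[0,1]`, the fundamental theorem of calculus applies there,
and evaluating at `x = 1`, where `D(1) = 2 + ε² + ε³`, gives the information rate. -/

/-- The detector transfer function of the partial response 2 erasure channel
PR2(ε): `φ_PR2(x;ε) := 4ε³(4 − 4(1−ε)x + (1−ε)x²)/(4 − 2(1−ε²)x − (1−ε)ε²x²)²`. -/
noncomputable def phiPR2 (x ε : ℝ) : ℝ :=
  4*ε^3 * (4 - 4*(1-ε)*x + (1-ε)*x^2) / (4 - 2*(1-ε^2)*x - (1-ε)*ε^2*x^2)^2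

open Set intervalIntegral

noncomputable def pr2Denom (ε x : ℝ) : ℝ := 4 - 2*(1-ε^2)*x - (1-ε)*ε^2*x^2

noncomputable def pr2Antideriv (ε x : ℝ) : ℝ := 4*ε * (1/2 - (2 - x)/pr2Denom ε x)

lemma pr2Denom_pos {ε x : ℝ} (hε : ε ∈ Icc (0:ℝ) 1) (hx : x ∈ Icc (0:ℝ) 1) :
    0 < pr2Denom ε x := by
  obtain ⟨hε0, hε1⟩ := hε
  obtain ⟨hx0, hx1⟩ := hx
  have hε' : 0 ≤ 1 - ε := sub_nonneg.2 hε1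
  have hx' : 0 ≤ 1 - x := sub_nonneg.2 hx1
  unfold pr2Denom
  nlinarith [mul_nonneg hε' hx', mul_nonneg (mul_nonneg hε' hx') (mul_nonneg hx0 hx0),
    mul_nonneg (mul_nonneg hx0 hx0) (mul_nonneg hε0 hε0), mul_nonneg hx' (mul_nonneg hε0 hε0)]

lemma hasDerivAt_pr2Denom (ε x : ℝ) :
    HasDerivAt (pr2Denom ε) (-(2*(1-ε^2)) - (1-ε)*ε^2*(2*x)) x := by
  have hlin : HasDerivAt (fun t : ℝ => 2*(1-ε^2)*t) (2*(1-ε^2)) x := by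
    simpa using (hasDerivAt_id x).const_mul (2*(1-ε^2))
  have hquad : HasDerivAt (fun t : ℝ => (1-ε)*ε^2*t^2) ((1-ε)*ε^2*(2*x)) x := by
    simpa using (hasDerivAt_pow 2 x).const_mul ((1-ε)*ε^2)
  exact ((hasDerivAt_const x 4).sub hlin).sub hquad |>.congr_deriv (by ring)

lemma hasDerivAt_pr2Antideriv {ε x : ℝ} (hD : pr2Denom ε x ≠ 0) :
    HasDerivAt (pr2Antideriv ε) (phiPR2 x ε) x := by
  have hquot := ((hasDerivAt_id x).const_sub 2).div (hasDerivAt_pr2Denom ε x) hD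
  refine ((hquot.const_sub (1/2)).const_mul (4*ε)).congr_deriv ?_
  unfold phiPR2
  rw [← pr2Denom, id]
  field_simp
  unfold pr2Denom
  ring

lemma integral_phiPR2 {ε x : ℝ} (hε : ε ∈ Icc (0:ℝ) 1) (hx : x ∈ Icc (0:ℝ) 1) :
    ∫ t in (0:ℝ)..x, phiPR2 t ε = pr2Antideriv ε x - pr2Antideriv ε 0 := by
  have hsub : uIcc 0 x ⊆ Icc (0:ℝ) 1 := by
    rw [uIcc_of_le hx.1]
    exact Icc_subset_Icc_right hx.2
  have hpos : ∀ t ∈ uIcc 0 x, 0 < pr2Denom ε t := fun t ht => pr2Denom_pos hε (hsub ht)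
  refine integral_eq_sub_of_hasDerivAt
    (fun t ht => hasDerivAt_pr2Antideriv (hpos t ht).ne') (ContinuousOn.intervalIntegrable ?_)
  exact continuousOn_const.mul (by fun_prop) |>.div (by fun_prop)
    fun t ht => pow_ne_zero 2 (hpos t ht).ne'

/-- For PR2(ε), `Φ_PR2(x;ε) = 4ε(1/2 − (2−x)/(4 − 2(1−ε²)x − (1−ε)ε²x²))`, and
hence the symmetric information rate is `I_PR2(ε) = 1 − 2ε³(1+ε)/(2+ε²+ε³)`. -/
theorem stmt16 : ∀ ε ∈ Set.Icc (0:ℝ) 1,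
    (1 - ∫ t in (0:ℝ)..1, phiPR2 t ε) = 1 - 2*ε^3*(1+ε)/(2 + ε^2 + ε^3) ∧
    ∀ x ∈ Set.Icc (0:ℝ) 1,
      (∫ t in (0:ℝ)..x, phiPR2 t ε)
        = 4*ε * (1/2 - (2 - x)/(4 - 2*(1-ε^2)*x - (1-ε)*ε^2*x^2)) := by
  intro ε hε
  have hΦ : ∀ x ∈ Icc (0:ℝ) 1, ∫ t in (0:ℝ)..x, phiPR2 t ε = pr2Antideriv ε x := by
    intro x hx
    rw [integral_phiPR2 hε hx]
    norm_num [pr2Antideriv, pr2Denom]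
  refine ⟨?_, hΦ⟩
  have hD1 : pr2Denom ε 1 = 2 + ε^2 + ε^3 := by unfold pr2Denom; ring
  have hD1pos : 0 < pr2Denom ε 1 := pr2Denom_pos hε ⟨zero_le_one, le_rfl⟩
  rw [hΦ 1 ⟨zero_le_one, le_rfl⟩, pr2Antideriv, ← hD1]
  field_simp
  rw [hD1]
  ring
end
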